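/- Let v, a, b, c, d be points of ℝ³ such that b − v and c − v are linearly independent, and set m = (b − v) × (c − v), n₁ = (a − v) × (b − v), n₃ = (c − v) × (d − v). Assume ⟨a − v, m⟩ · ⟨d − v, m⟩ > 0, i.e., a and d lie strictly on the same side of the plane through v, b, c (the middle face is not an inflection face). Then the unoriented angle between the orthogonal projections of n₁ and n₃ onto the plane m⊥ equals π − ∠(b − v, c − v). (Lemma 2.3, cases (i)/(iii): the spherical angle of the Gauss image of a vertex star at the normal of a non-inflection face is π − α, respectively 3π − α for a reflex face angle; its unoriented representative is π minus the angle between the two edges.) -/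

import Mathlib

open RealInnerProductSpace

noncomputable section

/-- Euclidean 3-space. -/
abbrev E3 : Type := EuclideanSpace ℝ (Fin 3)

/-- The cross product on `E3`. -/
noncomputable def cross3 (a b : E3) : E3 :=
  (WithLp.equiv 2 (Fin 3 → ℝ)).symm
    ![a 1 * b 2 - a 2 * b 1, a 2 * b 0 - a 0 * b 2, a 0 * b 1 - a 1 * b 0]

/-- The orthogonal projection of `z` onto the plane `m⊥`. -/
noncomputable def projPerp (m z : E3) : E3 := z - (⟪z, m⟫ / ⟪m, m⟫) • m

/-!
With `u = a - v`, `p = b - v`, `q = c - v`, `w = d - v` and `m = p × q`, the vector triple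
product gives `projPerp m z = |m|⁻² • m × (z × m)`. Since `p, q ⊥ m`, this turns `n₁ = u × p`
into `(⟪u, m⟫ / |m|²) • m × p` and `n₃ = q × w` into `-(⟪w, m⟫ / |m|²) • m × q`. When `a` and `d`
are on the same side of the middle face the two scalars have the same sign, so the angle is
`π - ∠(m × p, m × q)`; and `m × ·` acts on `m⊥` as a quarter turn scaled by `|m|`, which
preserves angles.
-/

open InnerProductGeometry Matrix

lemma ofLp_cross3 (u v : E3) : (cross3 u v).ofLp = u.ofLp ⨯₃ v.ofLp := by
  ext i; fin_cases i <;> simp [cross3, cross_apply]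

lemma real_inner_eq_dotProduct (x y : E3) : ⟪x, y⟫ = x.ofLp ⬝ᵥ y.ofLp := by
  rw [EuclideanSpace.inner_eq_star_dotProduct, star_trivial, dotProduct_comm]

lemma cross3_anticomm (u v : E3) : -cross3 u v = cross3 v u :=
  WithLp.ofLp_injective 2 <| by simp only [WithLp.ofLp_neg, ofLp_cross3, cross_anticomm]

lemma inner_self_cross3 (u v : E3) : ⟪u, cross3 u v⟫ = 0 := by
  rw [real_inner_eq_dotProduct, ofLp_cross3, dot_self_cross]

lemma inner_cross3_self (u v : E3) : ⟪v, cross3 u v⟫ = 0 := by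
  rw [real_inner_eq_dotProduct, ofLp_cross3, dot_cross_self]

lemma inner_cross3_cross3 (u v w x : E3) :
    ⟪cross3 u v, cross3 w x⟫ = ⟪u, w⟫ * ⟪v, x⟫ - ⟪u, x⟫ * ⟪v, w⟫ := by
  simp only [real_inner_eq_dotProduct, ofLp_cross3, cross_dot_cross]

lemma cross3_smul_right (u v : E3) (r : ℝ) : cross3 u (r • v) = r • cross3 u v :=
  WithLp.ofLp_injective 2 <| by simp only [ofLp_cross3, WithLp.ofLp_smul, map_smul]

lemma cross3_cross3 (u v w : E3) : cross3 (cross3 u v) w = ⟪u, w⟫ • v - ⟪v, w⟫ • u :=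
  WithLp.ofLp_injective 2 <| by
    simp only [ofLp_cross3, WithLp.ofLp_sub, WithLp.ofLp_smul, real_inner_eq_dotProduct,
      cross_cross_eq_smul_sub_smul]

lemma cross3_cross3' (u v w : E3) : cross3 u (cross3 v w) = ⟪u, w⟫ • v - ⟪v, u⟫ • w :=
  WithLp.ofLp_injective 2 <| by
    simp only [ofLp_cross3, WithLp.ofLp_sub, WithLp.ofLp_smul, real_inner_eq_dotProduct,
      cross_cross_eq_smul_sub_smul']

lemma norm_cross3_of_inner_eq_zero {m p : E3} (h : ⟪p, m⟫ = 0) :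
    ‖cross3 m p‖ = ‖m‖ * ‖p‖ := by
  have : ‖cross3 m p‖ ^ 2 = (‖m‖ * ‖p‖) ^ 2 := by
    rw [← real_inner_self_eq_norm_sq, inner_cross3_cross3, h, mul_zero, sub_zero,
      real_inner_self_eq_norm_sq, real_inner_self_eq_norm_sq]
    ring
  exact (pow_left_inj₀ (norm_nonneg _) (by positivity) two_ne_zero).mp this

lemma angle_cross3_cross3 {m p q : E3} (hm : m ≠ 0) (hp : ⟪p, m⟫ = 0) (hq : ⟪q, m⟫ = 0) :
    angle (cross3 m p) (cross3 m q) = angle p q := by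
  have hm2 : ‖m‖ * ‖m‖ ≠ 0 := by positivity
  rw [angle, angle, inner_cross3_cross3, hp, mul_zero, sub_zero, real_inner_self_eq_norm_mul_norm,
    norm_cross3_of_inner_eq_zero hp, norm_cross3_of_inner_eq_zero hq,
    mul_mul_mul_comm, mul_div_mul_left _ _ hm2]

lemma projPerp_eq_cross3_cross3 {m : E3} (hm : m ≠ 0) (z : E3) :
    projPerp m z = ⟪m, m⟫⁻¹ • cross3 m (cross3 z m) := by
  have hk : ⟪m, m⟫ ≠ 0 := inner_self_ne_zero.mpr hm
  rw [cross3_cross3', smul_sub, smul_smul, inv_mul_cancel₀ hk, one_smul, smul_smul,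
    inv_mul_eq_div, projPerp]

lemma projPerp_cross3 {m v : E3} (hm : m ≠ 0) (hv : ⟪v, m⟫ = 0) (u : E3) :
    projPerp m (cross3 u v) = (⟪u, m⟫ / ⟪m, m⟫) • cross3 m v := by
  rw [projPerp_eq_cross3_cross3 hm, cross3_cross3, hv, zero_smul, sub_zero,
    cross3_smul_right, smul_smul, inv_mul_eq_div]

lemma projPerp_neg (m z : E3) : projPerp m (-z) = -projPerp m z := by
  simp only [projPerp, inner_neg_left, neg_div, neg_smul, sub_neg_eq_add, neg_sub']

lemma angle_smul_smul_of_mul_pos {V : Type*} [NormedAddCommGroup V] [InnerProductSpace ℝ V]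
    (x y : V) {r s : ℝ} (h : 0 < r * s) : angle (r • x) (s • y) = angle x y := by
  rcases mul_pos_iff.mp h with ⟨hr, hs⟩ | ⟨hr, hs⟩
  · rw [angle_smul_left_of_pos _ _ hr, angle_smul_right_of_pos _ _ hs]
  · rw [angle_smul_left_of_neg _ _ hr, angle_smul_right_of_neg _ _ hs, angle_neg_neg]

theorem stmt0_general (v a b c d : E3)
    (hside : 0 < ⟪a - v, cross3 (b - v) (c - v)⟫ * ⟪d - v, cross3 (b - v) (c - v)⟫) :
    InnerProductGeometry.angle
        (projPerp (cross3 (b - v) (c - v)) (cross3 (a - v) (b - v)))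
        (projPerp (cross3 (b - v) (c - v)) (cross3 (c - v) (d - v)))
      = Real.pi - InnerProductGeometry.angle (b - v) (c - v) := by
  set p := b - v
  set q := c - v
  set m := cross3 p q
  have hm : m ≠ 0 := by
    rintro hm
    simp [hm] at hside
  have hk : 0 < ⟪m, m⟫ := real_inner_self_pos.mpr hm
  have hpm : ⟪p, m⟫ = 0 := inner_self_cross3 p q
  have hqm : ⟪q, m⟫ = 0 := inner_cross3_self p q
  have hsign : 0 < ⟪a - v, m⟫ / ⟪m, m⟫ * (⟪d - v, m⟫ / ⟪m, m⟫) := by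
    rw [div_mul_div_comm]
    exact div_pos hside (mul_pos hk hk)
  rw [← cross3_anticomm (d - v) q, projPerp_neg, projPerp_cross3 hm hpm,
    projPerp_cross3 hm hqm, angle_neg_right, angle_smul_smul_of_mul_pos _ _ hsign,
    angle_cross3_cross3 hm hpm hqm]

/-- Lemma 2.3, cases (i)/(iii): if the middle face of three consecutive faces of a
vertex star is *not* an inflection face (`a` and `d` lie strictly on the same side
of the plane of the middle face), then the unoriented angle between the projections
of the outer face normals `n₁, n₃` onto the plane orthogonal to the middle face
normal `m` equals `π − ∠(b − v, c − v)`. -/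
theorem stmt0 (v a b c d : E3)
    (hbc : LinearIndependent ℝ ![b - v, c - v])
    (hside : 0 < ⟪a - v, cross3 (b - v) (c - v)⟫ * ⟪d - v, cross3 (b - v) (c - v)⟫) :
    InnerProductGeometry.angle
        (projPerp (cross3 (b - v) (c - v)) (cross3 (a - v) (b - v)))
        (projPerp (cross3 (b - v) (c - v)) (cross3 (c - v) (d - v)))
      = Real.pi - InnerProductGeometry.angle (b - v) (c - v) :=
  stmt0_general v a b c d hside
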